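/- Combining lemma (full statement): WLCWIS(P₁,P₂) = max_{1≤i,j≤n} WLCWIS(sᵢ,tⱼ) + (4n−2)·ℓ, where P₁ = A^{2n} s₁ YB s₂ YB … YB s_n Z^{2n} and P₂ = (ZYBA)^n t₁ ZYBA t₂ … ZYBA t_n (ZYBA)^n. -/

import Mathlib

open List

/-- `C` is a common weakly increasing subsequence of `A` and `B`. -/
def CWIS {σ : Type*} [LinearOrder σ] (A B C : List σ) : Prop :=
  C.Chain' (· ≤ ·) ∧ C.Sublist A ∧ C.Sublist B

/-- Length of a longest common weakly increasing subsequence. -/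
noncomputable def LCWIS {σ : Type*} [LinearOrder σ] (A B : List σ) : ℕ :=
  sSup {n | ∃ C : List σ, CWIS A B C ∧ C.length = n}

/-- Maximum total weight of a common weakly increasing subsequence. -/
noncomputable def WLCWIS {σ : Type*} [LinearOrder σ] (w : σ → ℕ) (A B : List σ) : ℕ :=
  sSup {n | ∃ C : List σ, CWIS A B C ∧ (C.map w).sum = n}

/-- Blow-up: replace each symbol `a` by `w a` consecutive copies of `a`. -/
def blow {σ : Type*} (w : σ → ℕ) (X : List σ) : List σ :=
  X.flatMap fun a => List.replicate (w a) a

/-- The sequence P₁ = A^{2n} s₁ YB s₂ YB … YB sₙ Z^{2n}. -/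
def P1 {Ω : Type*} {n : ℕ} (s : Fin n → List Ω) (a b y z : Ω) : List Ω :=
  List.replicate (2*n) a ++ List.intercalate [y, b] ((List.finRange n).map s) ++
    List.replicate (2*n) z

/-- The sequence P₂ = (ZYBA)ⁿ t₁ ZYBA t₂ … ZYBA tₙ (ZYBA)ⁿ. -/
def P2 {Ω : Type*} {n : ℕ} (t : Fin n → List Ω) (a b y z : Ω) : List Ω :=
  (List.replicate n [z, y, b, a]).flatten ++
    List.intercalate [z, y, b, a] ((List.finRange n).map t) ++
    (List.replicate n [z, y, b, a]).flatten
open List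

/-!
Write a weakly increasing common subsequence as `C = A^p B^q C' Y^r Z^s` with `C'` over `Σ`; its
weight is `(p + 2q + 2r + s)ℓ` plus that of `C'`. Every separator copy (`YB` in `P₁`, `ZYBA` in
`P₂`) is strictly decreasing, so it contains at most one symbol of `C`. Hence `C'` lies in a window
of `n - q - r` consecutive blocks `sᵢ` of `P₁`, and in a window of `3n - p - q - r - s` consecutive
blocks of `P₂`, read as the blocks `∅ⁿ t₁ … tₙ ∅ⁿ` separated by `ZYBA`. The two window sizes add up
to `4n - (p + 2q + 2r + s)`. If both windows are single blocks, `C'` is a common subsequence of some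
`sᵢ` and `tⱼ`; otherwise the weight of `C'` is at most `ℓ` times the smaller window, which is at
most `ℓ` times the sum of the window sizes minus `2ℓ`. Conversely, for `C₀` optimal for `(sᵢ, tⱼ)`
(indices from `0`), `A^(n+j-i) B^i C₀ Y^(n-1-i) Z^(n+i-j)` has weight `WLCWIS(sᵢ, tⱼ) + (4n - 2)ℓ`.
-/

namespace List

variable {α : Type*}

theorem intercalate_append (sep : List α) {L₁ L₂ : List (List α)} (h₁ : L₁ ≠ [])
    (h₂ : L₂ ≠ []) :
    intercalate sep (L₁ ++ L₂) = intercalate sep L₁ ++ sep ++ intercalate sep L₂ := by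
  induction L₁ with
  | nil => exact absurd rfl h₁
  | cons l L₁ ih =>
    rcases eq_or_ne L₁ [] with rfl | hL₁
    · simpa using intercalate_cons_of_ne_nil h₂
    · rw [cons_append, intercalate_cons_of_ne_nil (by simp [hL₁]), ih hL₁,
        intercalate_cons_of_ne_nil hL₁]
      simp

theorem reverse_intercalate (sep : List α) (L : List (List α)) :
    (intercalate sep L).reverse = intercalate sep.reverse (L.map reverse).reverse := by
  induction L with
  | nil => simp
  | cons l L ih =>
    rcases eq_or_ne L [] with rfl | hL
    · simp
    · rw [intercalate_cons_of_ne_nil hL, map_cons, reverse_cons,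
        intercalate_append _ (by simpa using hL) (by simp)]
      simp [ih]

theorem mem_of_mem_intercalate {x : α} {sep : List α} {L : List (List α)}
    (h : x ∈ intercalate sep L) : x ∈ sep ∨ ∃ l ∈ L, x ∈ l := by
  induction L with
  | nil => simp at h
  | cons l L ih =>
    rcases eq_or_ne L [] with rfl | hL
    · exact .inr ⟨l, by simp, by simpa using h⟩
    · rw [intercalate_cons_of_ne_nil hL] at h
      rcases mem_append.1 h with h | h
      · rcases mem_append.1 h with h | h
        · exact .inr ⟨l, by simp, h⟩
        · exact .inl h
      · rcases ih h with h | ⟨l', hl', h⟩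
        · exact .inl h
        · exact .inr ⟨l', mem_cons_of_mem l hl', h⟩

theorem flatten_replicate_append_comm (sep : List α) (m : ℕ) :
    (replicate m sep).flatten ++ sep = sep ++ (replicate m sep).flatten := by
  simpa using congrArg flatten ((replicate_succ' (n := m) (a := sep)).symm.trans replicate_succ)

theorem intercalate_replicate_nil_append_append (sep : List α) {L : List (List α)}
    (hL : L ≠ []) (m : ℕ) :
    intercalate sep (replicate m [] ++ L ++ replicate m []) =
      (replicate m sep).flatten ++ intercalate sep L ++ (replicate m sep).flatten := by
  induction m with
  | zero => simp
  | succ m ih =>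
    have hne : replicate m [] ++ L ++ replicate m [] ≠ [] := by simp [hL]
    rw [show replicate (m + 1) [] ++ L ++ replicate (m + 1) ([] : List α) =
        [[]] ++ (replicate m [] ++ L ++ replicate m []) ++ [[]] by
          nth_rewrite 1 [replicate_succ]; simp [replicate_succ']]
    rw [intercalate_append _ (by simp) (by simp), intercalate_append _ (by simp) hne, ih]
    simp [replicate_succ, flatten_replicate_append_comm]

theorem replicate_sublist_flatten_replicate {x : α} {sep : List α} (hx : x ∈ sep) (m : ℕ) :
    replicate m x <+ (replicate m sep).flatten := by
  induction m with
  | zero => simp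
  | succ m ih =>
    rw [replicate_succ, replicate_succ, flatten_cons]
    exact (singleton_sublist.2 hx).append ih

theorem replicate_append_replicate_sublist_flatten_replicate {x x' : α} {sep : List α}
    (hx : x ∈ sep) (hx' : x' ∈ sep) (m k : ℕ) :
    replicate m x ++ replicate k x' <+ (replicate (m + k) sep).flatten := by
  rw [replicate_add, flatten_append]
  exact (replicate_sublist_flatten_replicate hx m).append
    (replicate_sublist_flatten_replicate hx' k)

theorem flatten_replicate_append_getElem_sublist_intercalate (sep : List α)
    {L : List (List α)} {k : ℕ} (hk : k < L.length) :
    (replicate k sep).flatten ++ L[k] ++ (replicate (L.length - 1 - k) sep).flatten <+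
      intercalate sep L := by
  induction L generalizing k with
  | nil => simp at hk
  | cons l L ih =>
    rcases eq_or_ne L [] with rfl | hL
    · obtain rfl : k = 0 := by simpa using hk
      simp
    rw [intercalate_cons_of_ne_nil hL]
    obtain ⟨l', L', rfl⟩ := exists_cons_of_ne_nil hL
    cases k with
    | zero =>
      have h := (sublist_append_right _ _).trans (ih (k := 0) (by simp))
      simp only [length_cons, Nat.add_sub_cancel, Nat.sub_zero, replicate_zero, flatten_nil,
        nil_append, getElem_cons_zero] at h ⊢
      rw [replicate_succ, flatten_cons, append_assoc]
      exact (Sublist.refl l).append ((Sublist.refl sep).append h)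
    | succ k =>
      have h := ih (k := k) (by simpa using hk)
      simp only [length_cons, getElem_cons_succ] at h ⊢
      rw [replicate_succ, flatten_cons,
        show L'.length + 1 + 1 - 1 - (k + 1) = L'.length + 1 - 1 - k by omega]
      simpa only [append_assoc] using
        ((Sublist.refl sep).append h).trans (sublist_append_right l _)

theorem cons_sublist_append_of_not_mem {x : α} {w l m : List α} (hx : x ∉ l)
    (h : x :: w <+ l ++ m) : x :: w <+ m := by
  obtain ⟨c₁, c₂, e, h₁, h₂⟩ := sublist_append_iff.1 h
  match c₁, e with
  | [], e => simpa [e] using h₂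
  | x' :: _, e =>
    obtain ⟨rfl, -⟩ := cons.inj e
    exact absurd (h₁.subset mem_cons_self) hx

theorem sum_map_le_length_mul_of_sublist_flatten (w : α → ℕ) {ℓ : ℕ}
    {C : List α} {W : List (List α)} (h : C <+ W.flatten)
    (hW : ∀ l ∈ W, (l.map w).sum ≤ ℓ) : (C.map w).sum ≤ W.length * ℓ :=
  calc (C.map w).sum ≤ (W.flatten.map w).sum := (h.map w).sum_le_sum fun _ _ => Nat.zero_le _
    _ = (W.map fun l => (l.map w).sum).sum := by simp [map_flatten, sum_flatten, Function.comp_def]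
    _ ≤ W.length * ℓ := by
      simpa using sum_le_card_nsmul (W.map fun l => (l.map w).sum) ℓ (by simpa using hW)

section Strip

variable {r : α → α → Prop} {sep : List α}

theorem sublist_of_cons_sublist_append_of_pairwise (hsep : sep.Pairwise fun x y => ¬ r x y)
    {x : α} {w m : List α} (hc : (x :: w).Pairwise r) (h : x :: w <+ sep ++ m) : w <+ m := by
  obtain ⟨c₁, c₂, e, h₁, h₂⟩ := sublist_append_iff.1 h
  match c₁, e with
  | [], e =>
    rw [nil_append] at e
    exact sublist_of_cons_sublist (e ▸ h₂)
  | [_], e =>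
    obtain ⟨-, rfl⟩ := cons.inj e
    exact h₂
  | x' :: w₀ :: _, e =>
    obtain ⟨rfl, rfl⟩ := cons.inj e
    exact absurd (rel_of_pairwise_cons hc (a' := w₀) (by simp))
      (rel_of_pairwise_cons (hsep.sublist h₁) (a' := w₀) (by simp))

theorem sublist_intercalate_drop (hsep : sep.Pairwise fun x y => ¬ r x y)
    {L : List (List α)} {u R : List α} (hu : ∀ x ∈ u, ∀ l ∈ L, x ∉ l)
    (hc : (u ++ R).Pairwise r) (h : u ++ R <+ intercalate sep L) :
    u.length ≤ L.length - 1 ∧ R <+ intercalate sep (L.drop u.length) := by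
  induction L generalizing u with
  | nil => simp_all
  | cons l L ih =>
    cases u with
    | nil => simpa using h
    | cons x u =>
      have hxl : x ∉ l := hu x mem_cons_self l mem_cons_self
      rcases eq_or_ne L [] with rfl | hL
      · exact absurd (h.subset (mem_append_left R mem_cons_self)) (by simpa using hxl)
      rw [intercalate_cons_of_ne_nil hL, append_assoc, cons_append] at h
      rw [cons_append] at hc
      obtain ⟨hlen, hR⟩ := ih
        (fun y hy l' hl' => hu y (mem_cons_of_mem x hy) l' (mem_cons_of_mem l hl')) hc.of_cons
        (sublist_of_cons_sublist_append_of_pairwise hsep hc (cons_sublist_append_of_not_mem hxl h))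
      have := length_pos_iff.2 hL
      exact ⟨by simp; omega, by simpa using hR⟩

theorem sublist_intercalate_take (hsep : sep.Pairwise fun x y => ¬ r x y)
    {L : List (List α)} {R v : List α} (hv : ∀ x ∈ v, ∀ l ∈ L, x ∉ l)
    (hc : (R ++ v).Pairwise r) (h : R ++ v <+ intercalate sep L) :
    v.length ≤ L.length - 1 ∧ R <+ intercalate sep (L.take (L.length - v.length)) := by
  have := sublist_intercalate_drop (r := fun x y => r y x) (sep := sep.reverse)
    (L := (L.map reverse).reverse) (u := v.reverse) (R := R.reverse) (pairwise_reverse.2 hsep)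
    (fun x hx l hl => by
      obtain ⟨l', hl', rfl⟩ := mem_map.1 (mem_reverse.1 hl)
      simpa using hv x (mem_reverse.1 hx) l' hl')
    (by rw [← reverse_append]; exact pairwise_reverse.2 hc)
    (by simpa [← reverse_append, ← reverse_intercalate] using h)
  refine ⟨by simpa using this.1, ?_⟩
  simpa [reverse_intercalate, drop_reverse, ← map_take] using this.2.reverse

theorem sublist_flatten_of_sublist_intercalate {R : List α} {L : List (List α)}
    (hR : ∀ x ∈ R, x ∉ sep) (h : R <+ intercalate sep L) : R <+ L.flatten := by
  induction L generalizing R with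
  | nil => simpa using h
  | cons l L ih =>
    rcases eq_or_ne L [] with rfl | hL
    · simpa using h
    rw [intercalate_cons_of_ne_nil hL] at h
    obtain ⟨R₁₂, R₃, rfl, h₁₂, h₃⟩ := sublist_append_iff.1 h
    obtain ⟨R₁, R₂, rfl, h₁, h₂⟩ := sublist_append_iff.1 h₁₂
    obtain rfl : R₂ = [] := eq_nil_iff_forall_not_mem.2 fun x hx =>
      hR x (by simp [hx]) (h₂.subset hx)
    simpa using h₁.append (ih (fun x hx => hR x (by simp [hx])) h₃)

theorem exists_window_of_sublist_intercalate (hsep : sep.Pairwise fun x y => ¬ r x y)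
    {L : List (List α)} (hL : L ≠ []) {u R v : List α} (hu : ∀ x ∈ u, ∀ l ∈ L, x ∉ l)
    (hv : ∀ x ∈ v, ∀ l ∈ L, x ∉ l) (hR : ∀ x ∈ R, x ∉ sep) (hc : (u ++ R ++ v).Pairwise r)
    (h : u ++ R ++ v <+ intercalate sep L) :
    ∃ W, W <+ L ∧ W ≠ [] ∧ u.length + W.length + v.length = L.length ∧ R <+ W.flatten := by
  rw [append_assoc] at hc h
  obtain ⟨hu_len, h₁⟩ := sublist_intercalate_drop hsep hu hc h
  obtain ⟨hv_len, h₂⟩ := sublist_intercalate_take hsep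
    (fun x hx l hl => hv x hx l (mem_of_mem_drop hl)) (hc.sublist (sublist_append_right u _)) h₁
  have := length_pos_iff.2 hL
  refine ⟨_, (take_sublist _ _).trans (drop_sublist _ _), ?_, ?_,
    sublist_flatten_of_sublist_intercalate hR h₂⟩
  · rw [← length_pos_iff]; simp at hv_len ⊢; omega
  · simp at hv_len ⊢; omega

end Strip

end List

section SortedDecomposition

variable {Ω : Type*} [LinearOrder Ω]

theorem exists_eq_replicate_append_of_pairwise {C : List Ω} {c : Ω}
    (hC : C.Pairwise (· ≤ ·)) (h : ∀ x ∈ C, c ≤ x) :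
    ∃ k D, C = replicate k c ++ D ∧ ∀ x ∈ D, c < x := by
  induction C with
  | nil => exact ⟨0, [], rfl, by simp⟩
  | cons x C ih =>
    rw [pairwise_cons] at hC
    rcases (h x mem_cons_self).lt_or_eq with hcx | rfl
    · refine ⟨0, x :: C, rfl, fun y hy => ?_⟩
      rcases mem_cons.1 hy with rfl | hy
      exacts [hcx, hcx.trans_le (hC.1 y hy)]
    · obtain ⟨k, D, rfl, hD⟩ := ih hC.2 fun y hy => h y (mem_cons_of_mem _ hy)
      exact ⟨k + 1, D, rfl, hD⟩

theorem exists_eq_append_replicate_of_pairwise {C : List Ω} {c : Ω}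
    (hC : C.Pairwise (· ≤ ·)) (h : ∀ x ∈ C, x ≤ c) :
    ∃ k D, C = D ++ replicate k c ∧ ∀ x ∈ D, x < c := by
  obtain ⟨k, D, e, hD⟩ := exists_eq_replicate_append_of_pairwise (Ω := Ωᵒᵈ)
    (C := C.reverse) (c := OrderDual.toDual c) (pairwise_reverse.2 hC)
    (fun x hx => h x (mem_reverse.1 hx))
  let D' : List Ω := D
  have e' : C.reverse = replicate k c ++ D' := e
  refine ⟨k, D'.reverse, ?_, fun x hx => hD x (mem_reverse.1 hx)⟩
  rw [← reverse_reverse C, e']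
  simp

theorem exists_eq_replicate_append_append_replicate {a b y z : Ω} (hab : a < b) (hby : b < y)
    (hyz : y < z) {C : List Ω} (hC : C.Pairwise (· ≤ ·))
    (hmem : ∀ x ∈ C, x = a ∨ x = b ∨ (b < x ∧ x < y) ∨ x = y ∨ x = z) :
    ∃ p q r s Cm, (∀ x ∈ Cm, b < x ∧ x < y) ∧
      C = replicate p a ++ replicate q b ++ Cm ++ replicate r y ++ replicate s z := by
  obtain ⟨p, C, rfl, ha⟩ := exists_eq_replicate_append_of_pairwise hC fun x hx => by
    rcases hmem x hx with h | h | h | h | h <;> order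
  replace hmem := fun x hx => hmem x (mem_append_right _ hx)
  replace hC := (pairwise_append.1 hC).2.1
  obtain ⟨q, C, rfl, hb⟩ := exists_eq_replicate_append_of_pairwise (c := b) hC fun x hx => by
    have := ha x hx
    rcases hmem x hx with h | h | h | h | h <;> order
  replace hmem := fun x hx => hmem x (mem_append_right _ hx)
  replace ha := fun x hx => ha x (mem_append_right _ hx)
  replace hC := (pairwise_append.1 hC).2.1
  obtain ⟨s, C, rfl, hz⟩ := exists_eq_append_replicate_of_pairwise (c := z) hC fun x hx => by
    rcases hmem x hx with h | h | h | h | h <;> order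
  replace hmem := fun x hx => hmem x (mem_append_left _ hx)
  replace hb := fun x hx => hb x (mem_append_left _ hx)
  replace hC := (pairwise_append.1 hC).1
  obtain ⟨r, Cm, rfl, hy⟩ := exists_eq_append_replicate_of_pairwise (c := y) hC fun x hx => by
    have := hz x hx
    rcases hmem x hx with h | h | h | h | h <;> order
  exact ⟨p, q, r, s, Cm, fun x hx => ⟨hb x (mem_append_left _ hx), hy x hx⟩, by simp⟩

theorem pairwise_replicate_append_append_replicate {a b y z : Ω} (hab : a < b) (hby : b < y)
    (hyz : y < z) {Cm : List Ω} (hCm : ∀ x ∈ Cm, b < x ∧ x < y) (hC : Cm.Pairwise (· ≤ ·))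
    (p q r s : ℕ) :
    (replicate p a ++ replicate q b ++ Cm ++ replicate r y ++ replicate s z).Pairwise (· ≤ ·) := by
  simp only [pairwise_append, pairwise_replicate, hC, le_refl, or_true, true_and]
  refine ⟨⟨⟨?_, ?_⟩, ?_⟩, ?_⟩ <;> intro x hx v hv <;>
    simp only [mem_append, mem_replicate] at hx hv <;> casesm* _ ∨ _, _ ∧ _ <;> subst_vars <;>
    first | order | (have := hCm _ ‹_›; order)

end SortedDecomposition

section WLCWIS

variable {Ω : Type*} [LinearOrder Ω] (w : Ω → ℕ)

theorem bddAbove_CWIS_sums (A B : List Ω) :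
    BddAbove {m | ∃ C, CWIS A B C ∧ (C.map w).sum = m} := by
  refine ⟨(A.map w).sum, ?_⟩
  rintro _ ⟨C, ⟨-, hCA, -⟩, rfl⟩
  exact (hCA.map w).sum_le_sum fun _ _ => Nat.zero_le _

theorem le_WLCWIS {A B C : List Ω} (h : CWIS A B C) : (C.map w).sum ≤ WLCWIS w A B :=
  le_csSup (bddAbove_CWIS_sums w A B) ⟨C, h, rfl⟩

theorem WLCWIS_le {A B : List Ω} {m : ℕ} (h : ∀ C, CWIS A B C → (C.map w).sum ≤ m) :
    WLCWIS w A B ≤ m :=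
  csSup_le' <| by rintro _ ⟨C, hC, rfl⟩; exact h C hC

theorem exists_CWIS_sum_eq_WLCWIS (A B : List Ω) :
    ∃ C, CWIS A B C ∧ (C.map w).sum = WLCWIS w A B :=
  Nat.sSup_mem (s := {m | ∃ C, CWIS A B C ∧ (C.map w).sum = m})
    ⟨0, [], ⟨isChain_nil, nil_sublist _, nil_sublist _⟩, rfl⟩ (bddAbove_CWIS_sums w A B)

theorem WLCWIS_nil_right (A : List Ω) : WLCWIS w A [] = 0 :=
  Nat.le_zero.1 <| WLCWIS_le w fun C hC => by simp [sublist_nil.1 hC.2.2]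

theorem sum_map_add_two_mul_le_of_sublist_flatten {ℓ M : ℕ} {C : List Ω}
    (hC : C.Pairwise (· ≤ ·)) {W₁ W₂ : List (List Ω)} (hW₁ : W₁ ≠ []) (hW₂ : W₂ ≠ [])
    (h₁ : C <+ W₁.flatten) (h₂ : C <+ W₂.flatten) (hℓ₁ : ∀ l ∈ W₁, (l.map w).sum ≤ ℓ)
    (hℓ₂ : ∀ l ∈ W₂, (l.map w).sum ≤ ℓ) (hM : ∀ l₁ ∈ W₁, ∀ l₂ ∈ W₂, WLCWIS w l₁ l₂ ≤ M) :
    (C.map w).sum + 2 * ℓ ≤ M + (W₁.length + W₂.length) * ℓ := by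
  by_cases h : W₁.length = 1 ∧ W₂.length = 1
  · obtain ⟨⟨l₁, rfl⟩, ⟨l₂, rfl⟩⟩ := And.intro (length_eq_one_iff.1 h.1) (length_eq_one_iff.1 h.2)
    have := le_WLCWIS w ⟨isChain_iff_pairwise.2 hC, by simpa using h₁, by simpa using h₂⟩
    have := hM l₁ (by simp) l₂ (by simp)
    simp only [length_singleton]
    omega
  · have e₁ := sum_map_le_length_mul_of_sublist_flatten w h₁ hℓ₁
    have e₂ := sum_map_le_length_mul_of_sublist_flatten w h₂ hℓ₂
    have := length_pos_iff.2 hW₁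
    have := length_pos_iff.2 hW₂
    rcases (by omega : 2 ≤ W₁.length ∨ 2 ≤ W₂.length) with hk | hk
    · nlinarith
    · nlinarith

end WLCWIS

section Sublists

variable {Ω : Type*} {n : ℕ} {a b y z : Ω}

theorem P2_eq_intercalate (t : Fin n → List Ω) (hn : 0 < n) :
    P2 t a b y z =
      intercalate [z, y, b, a] (replicate n [] ++ (finRange n).map t ++ replicate n []) := by
  rw [intercalate_replicate_nil_append_append _ (by simp; omega)]
  rfl

theorem replicate_append_sublist_P1 {s : Fin n → List Ω} (i : Fin n) {C₀ : List Ω} (h : C₀ <+ s i)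
    {p s' : ℕ} (hp : p ≤ 2 * n) (hs' : s' ≤ 2 * n) :
    replicate p a ++ replicate i b ++ C₀ ++ replicate (n - 1 - i) y ++ replicate s' z <+
      P1 s a b y z := by
  have hI := flatten_replicate_append_getElem_sublist_intercalate [y, b]
    (L := (finRange n).map s) (k := i) (by simp)
  simp only [length_map, length_finRange, getElem_map, getElem_finRange] at hI
  have hb := replicate_sublist_flatten_replicate (x := b) (sep := [y, b]) (by simp) i
  have hy := replicate_sublist_flatten_replicate (x := y) (sep := [y, b]) (by simp) (n - 1 - i)
  simpa only [P1, append_assoc] using ((replicate_sublist_replicate a).2 hp).append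
    ((((hb.append h).append hy).trans hI).append ((replicate_sublist_replicate z).2 hs'))

theorem replicate_append_sublist_P2 {t : Fin n → List Ω} (j : Fin n) {C₀ : List Ω} (h : C₀ <+ t j)
    {p q r s' : ℕ} (hpq : p + q = n + j) (hrs : r + s' = 2 * n - 1 - j) :
    replicate p a ++ replicate q b ++ C₀ ++ replicate r y ++ replicate s' z <+
      P2 t a b y z := by
  have hI := flatten_replicate_append_getElem_sublist_intercalate [z, y, b, a]
    (L := replicate n [] ++ (finRange n).map t ++ replicate n []) (k := n + j) (by simp; omega)
  simp only [append_assoc, length_replicate, le_add_iff_nonneg_right, zero_le,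
    getElem_append_right, add_tsub_cancel_left, length_map, length_finRange, Fin.is_lt,
    getElem_append_left, getElem_map, getElem_finRange, Fin.cast_mk, Fin.eta, length_append] at hI
  rw [show n + (n + n) - 1 - (n + j) = r + s' by omega, ← hpq] at hI
  have hab := replicate_append_replicate_sublist_flatten_replicate (x := a) (x' := b)
    (sep := [z, y, b, a]) (by simp) (by simp) p q
  have hyz := replicate_append_replicate_sublist_flatten_replicate (x := y) (x' := z)
    (sep := [z, y, b, a]) (by simp) (by simp) r s'
  rw [P2_eq_intercalate t j.pos]
  have hC := (hab.append h).append hyz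
  simp only [append_assoc] at hC ⊢
  exact hC.trans hI

end Sublists

section Bounds

variable {Ω : Type*} [LinearOrder Ω] {n : ℕ} {a b y z : Ω}

theorem of_mem_P1 {s : Fin n → List Ω} (hs : ∀ i, ∀ x ∈ s i, b < x ∧ x < y) {x : Ω}
    (hx : x ∈ P1 s a b y z) : x = a ∨ x = b ∨ (b < x ∧ x < y) ∨ x = y ∨ x = z := by
  simp only [P1, mem_append, mem_replicate] at hx
  rcases hx with (⟨-, rfl⟩ | hx) | ⟨-, rfl⟩
  · exact .inl rfl
  · rcases mem_of_mem_intercalate hx with hx | ⟨l, hl, hx⟩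
    · simp only [mem_cons, not_mem_nil, or_false] at hx
      tauto
    · obtain ⟨i, -, rfl⟩ := mem_map.1 hl
      exact .inr (.inr (.inl (hs i x hx)))
  · exact .inr (.inr (.inr (.inr rfl)))

theorem filter_P1 {s : Fin n → List Ω} (hab : a < b) (hby : b < y) (hyz : y < z)
    (hs : ∀ i, ∀ x ∈ s i, b < x ∧ x < y) :
    (P1 s a b y z).filter (fun x => b ≤ x ∧ x ≤ y) = intercalate [y, b] ((finRange n).map s) := by
  have hmem : ∀ x ∈ intercalate [y, b] ((finRange n).map s), b ≤ x ∧ x ≤ y := by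
    intro x hx
    rcases mem_of_mem_intercalate hx with hx | ⟨l, hl, hx⟩
    · simp only [mem_cons, not_mem_nil, or_false] at hx
      rcases hx with rfl | rfl <;> constructor <;> order
    · obtain ⟨i, -, rfl⟩ := mem_map.1 hl
      exact ⟨(hs i x hx).1.le, (hs i x hx).2.le⟩
  simpa [P1, filter_append, hyz.not_ge, not_le.2 hab] using hmem

theorem exists_window_P1 {s : Fin n → List Ω} (hn : 0 < n) (hab : a < b) (hby : b < y)
    (hyz : y < z) (hs : ∀ i, ∀ x ∈ s i, b < x ∧ x < y) {p q r s' : ℕ} {Cm : List Ω}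
    (hCm : ∀ x ∈ Cm, b < x ∧ x < y)
    (hC : (replicate p a ++ replicate q b ++ Cm ++ replicate r y ++ replicate s' z).Pairwise
      (· ≤ ·))
    (h : replicate p a ++ replicate q b ++ Cm ++ replicate r y ++ replicate s' z <+ P1 s a b y z) :
    ∃ W, W <+ (finRange n).map s ∧ W ≠ [] ∧ q + W.length + r = n ∧ Cm <+ W.flatten := by
  have e : (replicate p a ++ replicate q b ++ Cm ++ replicate r y ++ replicate s' z).filter
      (fun x => b ≤ x ∧ x ≤ y) = replicate q b ++ Cm ++ replicate r y := by
    simpa [filter_append, hby.le, not_le.2 hab, not_le.2 hyz] using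
      fun x hx => And.intro (hCm x hx).1.le (hCm x hx).2.le
  have h' := h.filter (fun x => b ≤ x ∧ x ≤ y)
  rw [e, filter_P1 hab hby hyz hs] at h'
  have hblock : ∀ l ∈ (finRange n).map s, ∀ x ∈ l, b < x ∧ x < y := by
    simpa using hs
  obtain ⟨W, hW, hWne, hlen, hCmW⟩ := exists_window_of_sublist_intercalate (r := (· ≤ ·))
    (by simpa using hby) (by simp; omega)
    (fun x hx l hl hxl => by
      obtain ⟨-, rfl⟩ := mem_replicate.1 hx
      exact (hblock l hl x hxl).1.false)
    (fun x hx l hl hxl => by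
      obtain ⟨-, rfl⟩ := mem_replicate.1 hx
      exact (hblock l hl x hxl).2.false)
    (fun x hx => by simp [(hCm x hx).2.ne, (hCm x hx).1.ne'])
    (e ▸ hC.filter _) h'
  exact ⟨W, hW, hWne, by simpa using hlen, hCmW⟩

theorem exists_window_P2 {t : Fin n → List Ω} (hn : 0 < n) (hab : a < b) (hby : b < y)
    (hyz : y < z) (ht : ∀ j, ∀ x ∈ t j, b < x ∧ x < y) {p q r s' : ℕ} {Cm : List Ω}
    (hCm : ∀ x ∈ Cm, b < x ∧ x < y)
    (hC : (replicate p a ++ replicate q b ++ Cm ++ replicate r y ++ replicate s' z).Pairwise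
      (· ≤ ·))
    (h : replicate p a ++ replicate q b ++ Cm ++ replicate r y ++ replicate s' z <+ P2 t a b y z) :
    ∃ W, W <+ replicate n [] ++ (finRange n).map t ++ replicate n [] ∧ W ≠ [] ∧
      p + q + W.length + (r + s') = 3 * n ∧ Cm <+ W.flatten := by
  rw [P2_eq_intercalate t hn] at h
  have hblock : ∀ l ∈ replicate n [] ++ (finRange n).map t ++ replicate n [],
      ∀ x ∈ l, b < x ∧ x < y := by
    simp only [mem_append, mem_replicate, mem_map, mem_finRange, true_and]
    rintro l ((⟨-, rfl⟩ | ⟨j, rfl⟩) | ⟨-, rfl⟩) x hx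
    exacts [absurd hx (not_mem_nil), ht j x hx, absurd hx (not_mem_nil)]
  obtain ⟨W, hW, hWne, hlen, hCmW⟩ := exists_window_of_sublist_intercalate (r := (· ≤ ·))
    (sep := [z, y, b, a]) (L := replicate n [] ++ (finRange n).map t ++ replicate n [])
    (u := replicate p a ++ replicate q b) (v := replicate r y ++ replicate s' z)
    (by simp; constructorm* _ ∧ _ <;> order) (by simp; omega)
    (fun x hx l hl hxl => by
      have := hblock l hl x hxl
      rcases mem_append.1 hx with hx | hx <;> obtain ⟨-, rfl⟩ := mem_replicate.1 hx <;> order)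
    (fun x hx l hl hxl => by
      have := hblock l hl x hxl
      rcases mem_append.1 hx with hx | hx <;> obtain ⟨-, rfl⟩ := mem_replicate.1 hx <;> order)
    (fun x hx => by have := hCm x hx; simp; constructorm* _ ∧ _ <;> order)
    (by simpa only [append_assoc] using hC) (by simpa only [append_assoc] using h)
  exact ⟨W, hW, hWne, by simp at hlen; omega, hCmW⟩

variable (w : Ω → ℕ) {s t : Fin n → List Ω} {ℓ : ℕ}

theorem sum_map_add_two_mul_le_of_windows (hsℓ : ∀ i, ((s i).map w).sum ≤ ℓ)
    (htℓ : ∀ j, ((t j).map w).sum ≤ ℓ) {Cm : List Ω} (hCm : Cm.Pairwise (· ≤ ·))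
    {W₁ W₂ : List (List Ω)} (hW₁s : W₁ <+ (finRange n).map s)
    (hW₂t : W₂ <+ replicate n [] ++ (finRange n).map t ++ replicate n []) (hW₁ : W₁ ≠ [])
    (hW₂ : W₂ ≠ []) (h₁ : Cm <+ W₁.flatten) (h₂ : Cm <+ W₂.flatten) :
    (Cm.map w).sum + 2 * ℓ ≤
      Finset.univ.sup (fun ij : Fin n × Fin n => WLCWIS w (s ij.1) (t ij.2)) +
        (W₁.length + W₂.length) * ℓ := by
  have hW₁s' : ∀ l ∈ W₁, ∃ i, s i = l := fun l hl => by simpa using hW₁s.subset hl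
  have hW₂t' : ∀ l ∈ W₂, l = [] ∨ ∃ j, t j = l := fun l hl => by
    have := hW₂t.subset hl
    simp only [mem_append, mem_replicate, mem_map, mem_finRange, true_and] at this
    tauto
  refine sum_map_add_two_mul_le_of_sublist_flatten w hCm hW₁ hW₂ h₁ h₂
    (fun l hl => by obtain ⟨i, rfl⟩ := hW₁s' l hl; exact hsℓ i)
    (fun l hl => by rcases hW₂t' l hl with rfl | ⟨j, rfl⟩; exacts [by simp, htℓ j])
    (fun l₁ hl₁ l₂ hl₂ => ?_)
  obtain ⟨i, rfl⟩ := hW₁s' l₁ hl₁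
  rcases hW₂t' l₂ hl₂ with rfl | ⟨j, rfl⟩
  · simp [WLCWIS_nil_right]
  · exact Finset.le_sup (f := fun ij : Fin n × Fin n => WLCWIS w (s ij.1) (t ij.2))
      (Finset.mem_univ (i, j))

theorem WLCWIS_P1_P2_le (hn : 0 < n) (hab : a < b) (hby : b < y) (hyz : y < z)
    (hs : ∀ i, ∀ x ∈ s i, b < x ∧ x < y) (ht : ∀ j, ∀ x ∈ t j, b < x ∧ x < y)
    (hwa : w a = ℓ) (hwb : w b = 2 * ℓ) (hwy : w y = 2 * ℓ) (hwz : w z = ℓ)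
    (hsℓ : ∀ i, ((s i).map w).sum ≤ ℓ) (htℓ : ∀ j, ((t j).map w).sum ≤ ℓ) :
    WLCWIS w (P1 s a b y z) (P2 t a b y z) ≤
      Finset.univ.sup (fun ij : Fin n × Fin n => WLCWIS w (s ij.1) (t ij.2)) +
        (4 * n - 2) * ℓ := by
  refine WLCWIS_le w fun C ⟨hCc, hC₁, hC₂⟩ => ?_
  have hC := isChain_iff_pairwise.1 hCc
  obtain ⟨p, q, r, s', Cm, hCm, rfl⟩ := exists_eq_replicate_append_append_replicate hab hby hyz
    hC fun x hx => of_mem_P1 hs (hC₁.subset hx)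
  obtain ⟨W₁, hW₁s, hW₁, hlen₁, hCmW₁⟩ := exists_window_P1 hn hab hby hyz hs hCm hC hC₁
  obtain ⟨W₂, hW₂t, hW₂, hlen₂, hCmW₂⟩ := exists_window_P2 hn hab hby hyz ht hCm hC hC₂
  have key := sum_map_add_two_mul_le_of_windows w hsℓ htℓ
    (hC.sublist (((sublist_append_right _ _).trans (sublist_append_left _ _)).trans
      (sublist_append_left _ _))) hW₁s hW₂t hW₁ hW₂ hCmW₁ hCmW₂
  have hcount : 4 * n - 2 + 2 = p + 2 * q + 2 * r + s' + (W₁.length + W₂.length) := by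
    have := length_pos_iff.2 hW₁
    omega
  have : (4 * n - 2) * ℓ + 2 * ℓ = (p + 2 * q + 2 * r + s') * ℓ + (W₁.length + W₂.length) * ℓ := by
    rw [← add_mul, hcount, add_mul]
  have hsum : ((replicate p a ++ replicate q b ++ Cm ++ replicate r y ++ replicate s' z).map w).sum
      = (p + 2 * q + 2 * r + s') * ℓ + (Cm.map w).sum := by
    simp [hwa, hwb, hwy, hwz]
    ring
  omega

theorem le_WLCWIS_P1_P2 (hab : a < b) (hby : b < y) (hyz : y < z)
    (hs : ∀ i, ∀ x ∈ s i, b < x ∧ x < y)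
    (hwa : w a = ℓ) (hwb : w b = 2 * ℓ) (hwy : w y = 2 * ℓ) (hwz : w z = ℓ) (i j : Fin n) :
    WLCWIS w (s i) (t j) + (4 * n - 2) * ℓ ≤ WLCWIS w (P1 s a b y z) (P2 t a b y z) := by
  obtain ⟨C₀, ⟨hc, h₁, h₂⟩, hC₀⟩ := exists_CWIS_sum_eq_WLCWIS w (s i) (t j)
  have hi := i.isLt
  have hj := j.isLt
  have hmid : ∀ x ∈ C₀, b < x ∧ x < y := fun x hx => hs i x (h₁.subset hx)
  have hC := pairwise_replicate_append_append_replicate hab hby hyz hmid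
    (isChain_iff_pairwise.1 hc) (n + j - i) i (n - 1 - i) (n + i - j)
  refine le_of_eq_of_le ?_ (le_WLCWIS w ⟨isChain_iff_pairwise.2 hC,
    replicate_append_sublist_P1 i h₁ (by omega) (by omega),
    replicate_append_sublist_P2 j h₂ (by omega) (by omega)⟩)
  have hcount : n + j - i + 2 * i + 2 * (n - 1 - i) + (n + i - j) = 4 * n - 2 := by omega
  simp [hwa, hwb, hwy, hwz, hC₀, ← hcount]
  ring

end Bounds

theorem combining_lemma {Ω : Type*} [LinearOrder Ω] (w : Ω → ℕ) {n : ℕ}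
    (hn : 0 < n) (s t : Fin n → List Ω) (a b y z : Ω) (ℓ : ℕ)
    (hab : a < b) (hby : b < y) (hyz : y < z)
    (hs : ∀ i, ∀ x ∈ s i, b < x ∧ x < y) (ht : ∀ j, ∀ x ∈ t j, b < x ∧ x < y)
    (hwa : w a = ℓ) (hwb : w b = 2*ℓ) (hwy : w y = 2*ℓ) (hwz : w z = ℓ)
    -- ℓ is the maximum total weight of any sᵢ or tⱼ
    (hℓ : ℓ = (Finset.univ.sup fun i : Fin n => ((s i).map w).sum) ⊔
              (Finset.univ.sup fun j : Fin n => ((t j).map w).sum)) :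
    WLCWIS w (P1 s a b y z) (P2 t a b y z) =
      Finset.univ.sup (fun ij : Fin n × Fin n => WLCWIS w (s ij.1) (t ij.2)) +
        (4*n - 2) * ℓ := by
  have hsℓ : ∀ i, ((s i).map w).sum ≤ ℓ := fun i => hℓ ▸ le_sup_of_le_left
    (Finset.le_sup (f := fun i : Fin n => ((s i).map w).sum) (Finset.mem_univ i))
  have htℓ : ∀ j, ((t j).map w).sum ≤ ℓ := fun j => hℓ ▸ le_sup_of_le_right
    (Finset.le_sup (f := fun j : Fin n => ((t j).map w).sum) (Finset.mem_univ j))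
  obtain ⟨ij, -, hij⟩ := Finset.exists_mem_eq_sup Finset.univ
    ⟨(⟨0, hn⟩, ⟨0, hn⟩), Finset.mem_univ _⟩ fun ij : Fin n × Fin n => WLCWIS w (s ij.1) (t ij.2)
  refine le_antisymm (WLCWIS_P1_P2_le w hn hab hby hyz hs ht hwa hwb hwy hwz hsℓ htℓ) ?_
  rw [hij]
  exact le_WLCWIS_P1_P2 w hab hby hyz hs hwa hwb hwy hwz ij.1 ij.2
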